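/- arXiv:2106.03445 — 2 statements merged into one kernel-verified Lean document; each statement's English description precedes it below -/
import Mathlib

section
/- Let H₁, ..., H_k be finite groups and G ≅ H₁ * H₂ * ⋯ * H_k * F_q a free product with F_q free of rank q. Let g be a nontrivial element of (the canonical image of) H_i in G, and h ∈ G. Then h ∈ H_i if and only if both h and gh have finite order in G. -/
/-!
Write `h = of x * v * of y` with `x, y ∈ G i` and `v` a reduced word that neither begins nor ends
in `G i` (if there is no such `v`, then `h ∈ G i`). Conjugating by `of y` turns `h` and `of g * h`
into `of (y * x) * v` and `of (y * g * x) * v`. As `g ≠ 1`, one of `y * x`, `y * g * x` is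
nontrivial, and the corresponding conjugate is a reduced word beginning in `G i` and ending
outside it. Such a word is cyclically reduced: its powers are again nonempty reduced words, so it
has infinite order. The free factor is absorbed by reading `CoprodI H ∗ K` as a free product
indexed by `Option ι`.
-/

open Monoid

namespace Monoid.CoprodI

variable {ι : Type*}

namespace NeWord

variable {M : ι → Type*} [∀ i, Monoid (M i)]

theorem prod_ne_one {i j : ι} (w : NeWord M i j) : w.prod ≠ 1 := by
  classical
  intro h
  have : w.toWord = Word.empty := Word.equiv.symm.injective (h.trans Word.prod_empty.symm)
  exact w.toList_ne_nil (congrArg Word.toList this)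

theorem exists_prod_eq_pow_succ {i j : ι} (w : NeWord M i j) (hji : j ≠ i) (n : ℕ) :
    ∃ w' : NeWord M i j, w'.prod = w.prod ^ (n + 1) := by
  induction n with
  | zero => exact ⟨w, (pow_one _).symm⟩
  | succ n ih =>
    obtain ⟨w', hw'⟩ := ih
    exact ⟨w'.append hji w, by rw [append_prod, hw', ← pow_succ]⟩

theorem not_isOfFinOrder_prod {i j : ι} (w : NeWord M i j) (hij : i ≠ j) :
    ¬IsOfFinOrder w.prod := by
  intro hw
  obtain ⟨n, hn, hpow⟩ := hw.exists_pow_eq_one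
  obtain ⟨w', hw'⟩ := w.exists_prod_eq_pow_succ hij.symm (n - 1)
  exact w'.prod_ne_one (by rwa [hw', Nat.sub_add_cancel hn])

theorem not_isOfFinOrder_of_mul_prod {i a b : ι} {x : M i} (hx : x ≠ 1) (v : NeWord M a b)
    (hia : i ≠ a) (hib : i ≠ b) : ¬IsOfFinOrder (of x * v.prod) := by
  simpa using ((singleton x hx).append hia v).not_isOfFinOrder_prod hib

theorem prod_eq_of_head_or_exists_of_head_mul {i j : ι} (w : NeWord M i j) :
    (i = j ∧ w.prod = of w.head) ∨
      ∃ k, k ≠ i ∧ ∃ w' : NeWord M k j, w.prod = of w.head * w'.prod := by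
  induction w with
  | singleton x hx => exact .inl ⟨rfl, prod_singleton x hx⟩
  | append w₁ hne w₂ ih₁ _ =>
    rw [append_head, append_prod]
    rcases ih₁ with ⟨rfl, h₁⟩ | ⟨k, hk, w', h₁⟩
    · exact .inr ⟨_, hne.symm, w₂, by rw [h₁]⟩
    · exact .inr ⟨k, hk, w'.append hne w₂, by rw [h₁, append_prod, mul_assoc]⟩

theorem prod_eq_of_or_exists_of_mul_prod {j l : ι} (w : NeWord M j l) (i : ι) :
    (∃ x : M i, w.prod = of x) ∨
      ∃ x : M i, ∃ k, k ≠ i ∧ ∃ v : NeWord M k l, w.prod = of x * v.prod := by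
  by_cases hji : j = i
  · subst hji
    rcases w.prod_eq_of_head_or_exists_of_head_mul with ⟨-, h⟩ | ⟨k, hk, v, h⟩
    · exact .inl ⟨_, h⟩
    · exact .inr ⟨_, k, hk, v, h⟩
  · exact .inr ⟨1, j, hji, w, by rw [map_one, one_mul]⟩

end NeWord

theorem exists_neWord_prod_eq {M : ι → Type*} [∀ i, Monoid (M i)] {h : CoprodI M}
    (h1 : h ≠ 1) : ∃ (i j : ι) (w : NeWord M i j), w.prod = h := by
  classical
  have hne : Word.equiv h ≠ Word.empty := fun he =>
    h1 ((Word.equiv.symm_apply_apply h).symm.trans ((congrArg _ he).trans Word.prod_empty))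
  obtain ⟨i, j, w, hw⟩ := NeWord.of_word _ hne
  exact ⟨i, j, w, (congrArg Word.prod hw).trans (Word.equiv.symm_apply_apply h)⟩

variable {G : ι → Type*} [∀ i, Group (G i)]

theorem mem_range_of_or_exists_of_mul_prod_mul_of (h : CoprodI G) (i : ι) :
    h ∈ (of : G i →* CoprodI G).range ∨
      ∃ (x y : G i) (a b : ι), a ≠ i ∧ b ≠ i ∧
        ∃ v : NeWord G a b, h = of x * v.prod * of y := by
  rcases eq_or_ne h 1 with rfl | h1
  · exact .inl (one_mem _)
  obtain ⟨j, l, w, rfl⟩ := exists_neWord_prod_eq h1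
  rcases w.prod_eq_of_or_exists_of_mul_prod i with ⟨x, hx⟩ | ⟨x, a, ha, v, hv⟩
  · exact .inl ⟨x, hx.symm⟩
  rcases v.inv.prod_eq_of_or_exists_of_mul_prod i with ⟨y, hy⟩ | ⟨y, b, hb, u, hu⟩
  · rw [NeWord.inv_prod] at hy
    exact .inl ⟨x * y⁻¹, by rw [hv, map_mul, map_inv, ← hy, inv_inv]⟩
  · rw [NeWord.inv_prod] at hu
    refine .inr ⟨x, y⁻¹, a, b, ha, hb, u.inv, ?_⟩
    rw [hv, NeWord.inv_prod, map_inv, mul_assoc, ← mul_inv_rev, ← hu, inv_inv]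

theorem mem_range_of_of_isOfFinOrder {i : ι} {g : G i} (hg : g ≠ 1) {h : CoprodI G}
    (hh : IsOfFinOrder h) (hgh : IsOfFinOrder (of g * h)) :
    h ∈ (of : G i →* CoprodI G).range := by
  refine (mem_range_of_or_exists_of_mul_prod_mul_of h i).resolve_right ?_
  rintro ⟨x, y, a, b, ha, hb, v, rfl⟩
  have eq_one (z : G i) (hz : IsOfFinOrder (of z * (of x * v.prod * of y))) : y * z * x = 1 := by
    by_contra hne
    refine NeWord.not_isOfFinOrder_of_mul_prod hne v ha.symm hb.symm
      ((isConj_iff.mpr ⟨of y, ?_⟩).isOfFinOrder hz)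
    simp only [map_mul, mul_assoc, mul_inv_cancel, mul_one]
  have h1 : y * 1 * x = 1 := eq_one 1 (by rwa [map_one, one_mul])
  exact hg (mul_left_cancel (mul_right_cancel ((eq_one g hgh).trans h1.symm)))

end Monoid.CoprodI

namespace Monoid.Coprod

universe u v

variable {ι : Type*} (H : ι → Type u) (K : Type v)

def OptionFactors : Option ι → Type (max u v)
  | none => ULift.{u} K
  | some i => ULift.{v} (H i)

variable [∀ i, Group (H i)] [Group K]

instance : ∀ o, Group (OptionFactors H K o)
  | none => ULift.group
  | some _ => ULift.group

variable {H K}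

def toCoprodIOption : CoprodI H ∗ K →* CoprodI (OptionFactors H K) :=
  lift (CoprodI.lift fun i => (CoprodI.of (i := some i)).comp MulEquiv.ulift.symm.toMonoidHom)
    ((CoprodI.of (i := none)).comp MulEquiv.ulift.symm.toMonoidHom)

def ofCoprodIOption : CoprodI (OptionFactors H K) →* CoprodI H ∗ K :=
  CoprodI.lift fun
    | none => inr.comp MulEquiv.ulift.toMonoidHom
    | some _ => inl.comp (CoprodI.of.comp MulEquiv.ulift.toMonoidHom)

theorem toCoprodIOption_inl_of {i : ι} (m : H i) :
    toCoprodIOption (inl (CoprodI.of m) : CoprodI H ∗ K) = CoprodI.of (i := some i) (.up m) :=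
  rfl

theorem ofCoprodIOption_toCoprodIOption (x : CoprodI H ∗ K) :
    ofCoprodIOption (toCoprodIOption x) = x := by
  suffices ofCoprodIOption.comp toCoprodIOption = .id (CoprodI H ∗ K) from
    DFunLike.congr_fun this x
  ext <;> rfl

theorem mem_range_inl_of_of_isOfFinOrder {i : ι} {g : H i} (hg : g ≠ 1) {h : CoprodI H ∗ K}
    (hh : IsOfFinOrder h) (hgh : IsOfFinOrder (inl (CoprodI.of g) * h)) :
    h ∈ ((inl : CoprodI H →* CoprodI H ∗ K).comp (CoprodI.of (i := i))).range := by
  obtain ⟨m, hm⟩ := CoprodI.mem_range_of_of_isOfFinOrder (G := OptionFactors H K)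
    (i := some i) (g := ULift.up g) (fun h1 => hg (congrArg ULift.down h1))
    (toCoprodIOption.isOfFinOrder hh)
    (by rw [← toCoprodIOption_inl_of, ← map_mul]; exact toCoprodIOption.isOfFinOrder hgh)
  exact ⟨m.down, by rw [← ofCoprodIOption_toCoprodIOption h, ← hm]; rfl⟩

end Monoid.Coprod

/-- Let `G = H₁ ∗ ⋯ ∗ H_k ∗ F_q` be a free product of finite groups `H i` and a free
group of rank `q`, and let `g` be a nontrivial element of the canonical image of
`H i` in `G`. Then `h` lies in (the image of) `H i` iff both `h` and `g * h` have
finite order in `G`. -/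
theorem mem_factor_iff_finite_orders {k q : ℕ} (H : Fin k → Type*)
    [∀ i, Group (H i)] [∀ i, Finite (H i)] (i : Fin k)
    (g h : Coprod (CoprodI H) (FreeGroup (Fin q)))
    (hg : g ∈ ((Coprod.inl : CoprodI H →* Coprod (CoprodI H) (FreeGroup (Fin q))).comp
        (CoprodI.of (i := i))).range)
    (hg1 : g ≠ 1) :
    h ∈ ((Coprod.inl : CoprodI H →* Coprod (CoprodI H) (FreeGroup (Fin q))).comp
        (CoprodI.of (i := i))).range ↔
      IsOfFinOrder h ∧ IsOfFinOrder (g * h) := by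
  obtain ⟨a, rfl⟩ := hg
  constructor
  · rintro ⟨m, rfl⟩
    refine ⟨MonoidHom.isOfFinOrder _ (isOfFinOrder_of_finite m), ?_⟩
    rw [← map_mul]
    exact MonoidHom.isOfFinOrder _ (isOfFinOrder_of_finite (a * m))
  · rintro ⟨hh, hgh⟩
    exact Coprod.mem_range_inl_of_of_isOfFinOrder (fun ha => hg1 (by rw [ha, map_one])) hh hgh
end

section
/- Let G be a group with generating set Σ whose Cayley graph is geodetic, and suppose every word u ∈ Σ* that is not geodesic contains a factor equal to the left-hand side of some rule in a set T of length-reducing rules, where each rule (ℓ, r) ∈ T satisfies ℓ =_G r. Then the rewriting system (Σ, T) is convergent and the irreducible words are exactly the geodesic words of G. -/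
/-- Let `G` be a group generated by a finite inverse-closed set `Σ` (given by
`ev : α → G`) whose Cayley graph is geodetic (each element has a unique geodesic
word), and let `T` be a set of length-reducing rules valid in `G` such that every
non-geodesic word contains the left-hand side of a rule as a factor.  Then the
rewriting system `(Σ, T)` is convergent (terminating and confluent) and the
irreducible words are exactly the geodesic words. -/
theorem geodetic_rewriting_convergent {G : Type*} [Group G] {α : Type*} [Fintype α]
    (ev : α → G)
    (hinv : ∀ a : α, ∃ b : α, ev b = (ev a)⁻¹)
    (hsurj : Function.Surjective (fun w : List α => (w.map ev).prod))
    (geodesic : List α → Prop)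
    (hgeodesic : ∀ u : List α, geodesic u ↔
      ∀ v : List α, (v.map ev).prod = (u.map ev).prod → u.length ≤ v.length)
    (hgeodetic : ∀ u v : List α, geodesic u → geodesic v →
      (u.map ev).prod = (v.map ev).prod → u = v)
    (T : Set (List α × List α))
    (hlr : ∀ p ∈ T, p.2.length < p.1.length)
    (hvalid : ∀ p ∈ T, ((p.1.map ev).prod : G) = (p.2.map ev).prod)
    (Rw : List α → List α → Prop)
    (hRw : ∀ u v, Rw u v ↔
      ∃ a b l r : List α, (l, r) ∈ T ∧ u = a ++ l ++ b ∧ v = a ++ r ++ b)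
    (hred : ∀ u : List α, ¬ geodesic u →
      ∃ a b l r : List α, (l, r) ∈ T ∧ u = a ++ l ++ b) :
    (¬ ∃ f : ℕ → List α, ∀ n : ℕ, Rw (f n) (f (n + 1))) ∧
    (∀ w x y : List α, Relation.ReflTransGen Rw w x → Relation.ReflTransGen Rw w y →
      ∃ z, Relation.ReflTransGen Rw x z ∧ Relation.ReflTransGen Rw y z) ∧
    (∀ u : List α, (¬ ∃ v, Rw u v) ↔ geodesic u) := by
  -- basic facts about one-step rewriting
  have hlen : ∀ u v, Rw u v → v.length < u.length := by
    intro u v h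
    obtain ⟨a, b, l, r, hT, hu, hv⟩ := (hRw u v).1 h
    have h2 : r.length < l.length := hlr _ hT
    subst hu hv
    simp only [List.length_append]
    omega
  have hprod : ∀ u v, Rw u v → ((v.map ev).prod : G) = (u.map ev).prod := by
    intro u v h
    obtain ⟨a, b, l, r, hT, hu, hv⟩ := (hRw u v).1 h
    have := hvalid _ hT
    subst hu hv
    simp only [List.map_append, List.prod_append]
    rw [this]
  have hprodRT : ∀ u v, Relation.ReflTransGen Rw u v →
      ((v.map ev).prod : G) = (u.map ev).prod := by
    intro u v h
    induction h with
    | refl => rfl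
    | tail _ hstep ih => rw [hprod _ _ hstep, ih]
  -- irreducible iff geodesic
  have hirr : ∀ u : List α, (¬ ∃ v, Rw u v) ↔ geodesic u := by
    intro u
    constructor
    · intro hnr
      by_contra hg
      obtain ⟨a, b, l, r, hT, hu⟩ := hred u hg
      exact hnr ⟨a ++ r ++ b, (hRw _ _).2 ⟨a, b, l, r, hT, hu, rfl⟩⟩
    · rintro hg ⟨v, hv⟩
      have h1 := hlen _ _ hv
      have h2 := hprod _ _ hv
      have := (hgeodesic u).1 hg v h2
      omega
  -- every word reduces to a geodesic word
  have hnorm : ∀ n (u : List α), u.length ≤ n →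
      ∃ z, Relation.ReflTransGen Rw u z ∧ geodesic z := by
    intro n
    induction n with
    | zero =>
      intro u hu
      by_cases hg : geodesic u
      · exact ⟨u, Relation.ReflTransGen.refl, hg⟩
      · obtain ⟨a, b, l, r, hT, hue⟩ := hred u hg
        have hstep : Rw u (a ++ r ++ b) := (hRw _ _).2 ⟨a, b, l, r, hT, hue, rfl⟩
        have := hlen _ _ hstep
        omega
    | succ n ih =>
      intro u hu
      by_cases hg : geodesic u
      · exact ⟨u, Relation.ReflTransGen.refl, hg⟩
      · obtain ⟨a, b, l, r, hT, hue⟩ := hred u hg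
        have hstep : Rw u (a ++ r ++ b) := (hRw _ _).2 ⟨a, b, l, r, hT, hue, rfl⟩
        have hl := hlen _ _ hstep
        obtain ⟨z, hz, hzg⟩ := ih (a ++ r ++ b) (by omega)
        exact ⟨z, Relation.ReflTransGen.head hstep hz, hzg⟩
  refine ⟨?_, ?_, hirr⟩
  · rintro ⟨f, hf⟩
    have : ∀ n, (f (n+1)).length < (f n).length := fun n => hlen _ _ (hf n)
    have hmono : ∀ n, (f n).length + n ≤ (f 0).length := by
      intro n
      induction n with
      | zero => omega
      | succ k ihk => have := this k; omega
    have := hmono ((f 0).length + 1)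
    omega
  · intro w x y hwx hwy
    obtain ⟨z1, hz1, hg1⟩ := hnorm x.length x le_rfl
    obtain ⟨z2, hz2, hg2⟩ := hnorm y.length y le_rfl
    have hp : ((z1.map ev).prod : G) = (z2.map ev).prod := by
      rw [hprodRT _ _ hz1, hprodRT _ _ hz2, hprodRT _ _ hwx, hprodRT _ _ hwy]
    have := hgeodetic z1 z2 hg1 hg2 hp
    subst this
    exact ⟨z1, hz1, hz2⟩
end
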